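/- arXiv:2507.20376 — 4 statements merged into one kernel-verified Lean document; each statement's English description precedes it below -/
import Mathlib

section
/- Let F : ℂ → ℂ be an entire function, ρ > 0, C > 0, and suppose that |F(λ)| ≤ C/|Re λ| for all λ in the closed ball B̄(iv, ρ) with Re λ ≠ 0, for a fixed v ∈ ℝ. Then |F(λ)| ≤ 8C/(3ρ) for all λ ∈ B̄(iv, ρ/2). (Levinson's lemma, quantitative form: the bound on the half-ball radius gives |F| ≤ K C/ρ on B̄(iv, ρ/2) for an absolute constant K.) -/
open Complex Metric ComplexConjugate

/-!
The factor `1 + (z - c)² / ρ²` has modulus `2 |Re (z - c)| / ρ` on the circle `|z - c| = ρ`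
(there `ρ² = (z - c) · conj (z - c)`), so multiplying `F` by it cancels the blow-up of the bound
`C / |Re (z - c)|` and leaves a function bounded by `2C / ρ` on the circle, hence on the disc by
the maximum modulus principle. On the half disc the factor has modulus at least `3 / 4`.
-/

theorem Complex.norm_one_add_sq_div_sq_of_norm_eq {w : ℂ} {r : ℝ} (hr : 0 < r)
    (hw : ‖w‖ = r) :
    ‖1 + w ^ 2 / (r : ℂ) ^ 2‖ = 2 * |w.re| / r := by
  subst hw
  have hconj : conj w ≠ 0 := (map_ne_zero _).mpr (norm_pos_iff.mp hr)
  have key : 1 + w ^ 2 / (‖w‖ : ℂ) ^ 2 = ((2 * w.re : ℝ) : ℂ) / conj w := by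
    rw [← mul_conj', ← add_conj]
    field_simp
    ring
  rw [key, norm_div, norm_conj, Complex.norm_real, Real.norm_eq_abs, abs_mul, abs_two]

theorem Complex.three_quarters_le_norm_one_add_sq_div_sq {w : ℂ} {r : ℝ} (hr : 0 < r)
    (hw : ‖w‖ ≤ r / 2) :
    3 / 4 ≤ ‖1 + w ^ 2 / (r : ℂ) ^ 2‖ := by
  have hsmall : ‖w ^ 2 / (r : ℂ) ^ 2‖ ≤ 1 / 4 := by
    rw [norm_div, norm_pow, norm_pow, Complex.norm_real, Real.norm_eq_abs, abs_of_pos hr,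
      div_le_iff₀ (by positivity)]
    nlinarith [norm_nonneg w]
  have := norm_sub_norm_le (1 : ℂ) (-(w ^ 2 / (r : ℂ) ^ 2))
  rw [norm_neg, sub_neg_eq_add, norm_one] at this
  linarith

theorem norm_mul_one_add_sq_div_sq_le {F : ℂ → ℂ} {c : ℂ} {ρ C : ℝ}
    (hF : DiffContOnCl ℂ F (ball c ρ)) (hρ : 0 < ρ) (hC : 0 ≤ C)
    (hbound : ∀ z ∈ sphere c ρ, (z - c).re ≠ 0 → ‖F z‖ ≤ C / |(z - c).re|) :
    ∀ z ∈ closedBall c ρ, ‖(1 + (z - c) ^ 2 / (ρ : ℂ) ^ 2) * F z‖ ≤ 2 * C / ρ := by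
  have hfactor : Differentiable ℂ fun z ↦ 1 + (z - c) ^ 2 / (ρ : ℂ) ^ 2 := by fun_prop
  have hG : DiffContOnCl ℂ (fun z ↦ (1 + (z - c) ^ 2 / (ρ : ℂ) ^ 2) • F z) (ball c ρ) :=
    hfactor.diffContOnCl.smul hF
  intro z hz
  rw [← closure_ball c hρ.ne'] at hz
  refine norm_le_of_forall_mem_frontier_norm_le isBounded_ball hG (fun w hw ↦ ?_) hz
  rw [frontier_ball c hρ.ne'] at hw
  have hw' : ‖w - c‖ = ρ := mem_sphere_iff_norm.mp hw
  rw [smul_eq_mul, norm_mul, norm_one_add_sq_div_sq_of_norm_eq hρ hw', mul_comm]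
  rcases eq_or_ne (w - c).re 0 with hre | hre
  · rw [hre]
    simp only [abs_zero, mul_zero, zero_div]
    positivity
  · have hpos : 0 < |(w - c).re| := abs_pos.mpr hre
    calc ‖F w‖ * (2 * |(w - c).re| / ρ) ≤ C / |(w - c).re| * (2 * |(w - c).re| / ρ) := by
          gcongr
          exact hbound w hw hre
      _ = 2 * C / ρ := by field_simp

theorem norm_le_of_norm_le_div_abs_re_sub {F : ℂ → ℂ} {c : ℂ} {ρ C : ℝ}
    (hF : DiffContOnCl ℂ F (ball c ρ)) (hρ : 0 < ρ) (hC : 0 ≤ C)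
    (hbound : ∀ z ∈ sphere c ρ, (z - c).re ≠ 0 → ‖F z‖ ≤ C / |(z - c).re|) :
    ∀ z ∈ closedBall c (ρ / 2), ‖F z‖ ≤ 8 * C / (3 * ρ) := by
  intro z hz
  have hG := norm_mul_one_add_sq_div_sq_le hF hρ hC hbound z
    (closedBall_subset_closedBall (half_le_self hρ.le) hz)
  have hfactor := three_quarters_le_norm_one_add_sq_div_sq hρ (mem_closedBall_iff_norm.mp hz)
  rw [norm_mul] at hG
  calc ‖F z‖ = 4 / 3 * (3 / 4 * ‖F z‖) := by ring
    _ ≤ 4 / 3 * (2 * C / ρ) := by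
        gcongr
        exact (mul_le_mul_of_nonneg_right hfactor (norm_nonneg _)).trans hG
    _ = 8 * C / (3 * ρ) := by field_simp; ring

/-- Levinson's lemma, quantitative form: if `F` is entire, `ρ > 0`, `C > 0`, and
`|F(λ)| ≤ C/|Re λ|` for all `λ` in the closed ball `B̄(iv, ρ)` with `Re λ ≠ 0`, then
`|F(λ)| ≤ (8/3) C/ρ` on `B̄(iv, ρ/2)`. -/
theorem stmt13 (F : ℂ → ℂ) (hF : Differentiable ℂ F) (ρ C : ℝ) (hρ : 0 < ρ) (hC : 0 < C)
    (v : ℝ)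
    (hbound : ∀ l ∈ closedBall ((v : ℂ) * Complex.I) ρ, l.re ≠ 0 → ‖F l‖ ≤ C / |l.re|) :
    ∀ l ∈ closedBall ((v : ℂ) * Complex.I) (ρ / 2), ‖F l‖ ≤ 8 * C / (3 * ρ) := by
  have hre : ∀ z : ℂ, (z - v * I).re = z.re := by simp
  refine norm_le_of_norm_le_div_abs_re_sub hF.diffContOnCl hρ hC.le fun z hz hz0 ↦ ?_
  rw [hre] at hz0 ⊢
  exact hbound z (sphere_subset_closedBall hz) hz0
end

section
/- Let δ : [0,∞) → (0,1) be non-increasing, Q ≥ 1, and let G : ℂ → ℂ be continuous on the strip {|Re λ| ≤ 1} satisfying the conclusion of the auxiliary lemma: for all v ∈ ℝ and λ ∈ B̄(iv, δ(|v|)), |G(λ)| ≤ |G(iv)| + 1 and δ(|v|)/δ(|Im λ|) ≤ Q. Define M(λ) = (1+|λ|)² · sup_{|Re μ| ≤ |Re λ|, Im μ = Im λ} (1 + |G(μ)|) / δ(|Im λ|). Then for every v ∈ ℝ and every λ ∈ B̄(iv, 1/M(iv)), one has M(λ)/M(iv) ≤ 8Q. -/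
open Complex Metric Set

/-!
On the imaginary axis the segment `{|Re μ| ≤ |Re λ|, Im μ = Im λ}` collapses to a point, so
`M(iv) = (1+|v|)² (1+|G(iv)|) / δ(|v|) ≥ 1/δ(|v|)`. Hence the ball `B̄(iv, 1/M(iv))` lies in
`B̄(iv, δ(|v|)) ⊆ B̄(iv, 1)`, and so does the whole segment of any of its points `λ`. The three
factors of `M(λ)` are then bounded separately: `(1+|λ|)² ≤ 4(1+|v|)²`, the supremum by
`2 + |G(iv)| ≤ 2(1+|G(iv)|)`, and `1/δ(|Im λ|) ≤ Q/δ(|v|)`.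
-/

namespace Complex

lemma setOf_abs_re_le_im_eq_of_re_eq_zero {z : ℂ} (hz : z.re = 0) :
    {m : ℂ | |m.re| ≤ |z.re| ∧ m.im = z.im} = {z} := by
  ext m
  simp only [mem_ofPred_eq, mem_singleton_iff, hz, abs_zero, abs_nonpos_iff]
  constructor
  · rintro ⟨hre, him⟩
    exact Complex.ext (hre.trans hz.symm) him
  · rintro rfl
    exact ⟨hz, rfl⟩

lemma dist_le_dist_of_abs_re_le {z l m : ℂ} (hz : z.re = 0) (hre : |m.re| ≤ |l.re|)
    (him : m.im = l.im) : dist m z ≤ dist l z := by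
  rw [dist_eq_re_im, dist_eq_re_im, hz, him, sub_zero, sub_zero]
  exact Real.sqrt_le_sqrt (add_le_add_left (sq_le_sq.mpr hre) _)

lemma norm_le_one_add_abs_of_mem_closedBall {v r : ℝ} {l : ℂ}
    (hl : l ∈ closedBall ((v : ℂ) * I) r) (hr : r ≤ 1) : ‖l‖ ≤ 1 + |v| := by
  have hdist : ‖l - v * I‖ ≤ 1 := (mem_closedBall_iff_norm.mp hl).trans hr
  calc ‖l‖ = ‖(l - v * I) + v * I‖ := by rw [sub_add_cancel]
    _ ≤ ‖l - v * I‖ + ‖(v : ℂ) * I‖ := norm_add_le _ _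
    _ ≤ 1 + |v| := by rw [norm_mul, norm_I, mul_one, norm_real, Real.norm_eq_abs]; linarith

lemma sSup_one_add_norm_le_of_forall_mem_closedBall {G : ℂ → ℂ} {z l : ℂ} {r : ℝ}
    (hz : z.re = 0) (hG : ∀ m ∈ closedBall z r, ‖G m‖ ≤ ‖G z‖ + 1) (hl : l ∈ closedBall z r) :
    sSup ((fun m : ℂ => 1 + ‖G m‖) '' {m : ℂ | |m.re| ≤ |l.re| ∧ m.im = l.im}) ≤ 2 + ‖G z‖ := by
  refine csSup_le ⟨_, mem_image_of_mem _ ⟨le_rfl, rfl⟩⟩ ?_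
  rintro _ ⟨m, ⟨hre, him⟩, rfl⟩
  have hm : m ∈ closedBall z r :=
    (dist_le_dist_of_abs_re_le hz hre him).trans (mem_closedBall.mp hl)
  linarith [hG m hm]

end Complex

theorem stmt14_general (δ : ℝ → ℝ)
    (hδrange : ∀ a : ℝ, 0 ≤ a → δ a ∈ Set.Ioo (0 : ℝ) 1)
    (Q : ℝ)
    (G : ℂ → ℂ)
    (hlem : ∀ v : ℝ, ∀ l ∈ closedBall ((v : ℂ) * Complex.I) (δ |v|),
      ‖G l‖ ≤ ‖G ((v : ℂ) * Complex.I)‖ + 1 ∧ δ |v| / δ |l.im| ≤ Q)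
    (M : ℂ → ℝ)
    (hM : ∀ l : ℂ, M l = (1 + ‖l‖) ^ 2 *
      sSup ((fun m : ℂ => 1 + ‖G m‖) '' {m : ℂ | |m.re| ≤ |l.re| ∧ m.im = l.im}) /
        δ |l.im|) :
    ∀ v : ℝ, ∀ l ∈ closedBall ((v : ℂ) * Complex.I) (1 / M ((v : ℂ) * Complex.I)),
      M l / M ((v : ℂ) * Complex.I) ≤ 8 * Q := by
  intro v l hl
  have hre : ((v : ℂ) * I).re = 0 := by simp
  obtain ⟨hδv, hδv_lt_one⟩ := hδrange |v| (abs_nonneg v)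
  obtain ⟨hδl, -⟩ := hδrange |l.im| (abs_nonneg l.im)
  have hMv : M (v * I) = (1 + |v|) ^ 2 * (1 + ‖G (v * I)‖) / δ |v| := by
    rw [hM, setOf_abs_re_le_im_eq_of_re_eq_zero hre, image_singleton, csSup_singleton]
    simp
  have hMv_pos : 0 < M (v * I) := by rw [hMv]; positivity
  have hradius : 1 / M (v * I) ≤ δ |v| := by
    rw [one_div_le hMv_pos hδv, hMv]
    gcongr
    exact one_le_mul_of_one_le_of_one_le (one_le_pow₀ (le_add_of_nonneg_right (abs_nonneg v)))
      (le_add_of_nonneg_right (norm_nonneg _))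
  have hl' : l ∈ closedBall ((v : ℂ) * I) (δ |v|) := closedBall_subset_closedBall hradius hl
  have hnorm : 1 + ‖l‖ ≤ 2 * (1 + |v|) := by
    linarith [norm_le_one_add_abs_of_mem_closedBall hl' hδv_lt_one.le, abs_nonneg v]
  have hsup := sSup_one_add_norm_le_of_forall_mem_closedBall hre (fun m hm => (hlem v m hm).1) hl'
  have hsup_nonneg : 0 ≤ sSup ((fun m : ℂ => 1 + ‖G m‖) ''
      {m : ℂ | |m.re| ≤ |l.re| ∧ m.im = l.im}) :=
    Real.sSup_nonneg fun _ ⟨_, _, hx⟩ => hx ▸ by positivity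
  have hδ : 1 / δ |l.im| ≤ Q / δ |v| := by
    calc 1 / δ |l.im| = δ |v| / δ |l.im| / δ |v| := by field_simp
      _ ≤ Q / δ |v| := div_le_div_of_nonneg_right (hlem v l hl').2 hδv.le
  rw [div_le_iff₀ hMv_pos, hMv, hM, div_eq_mul_one_div _ (δ |l.im|)]
  calc _ ≤ (2 * (1 + |v|)) ^ 2 * (2 * (1 + ‖G (v * I)‖)) * (Q / δ |v|) := by
        gcongr
        linarith [norm_nonneg (G (v * I))]
    _ = 8 * Q * ((1 + |v|) ^ 2 * (1 + ‖G (v * I)‖) / δ |v|) := by ring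

/-- With `δ : [0,∞) → (0,1)` non-increasing, `Q ≥ 1`, and `G` continuous on the strip
satisfying the conclusion of the auxiliary lemma, define
`M(λ) = (1+|λ|)² sup_{|Re μ| ≤ |Re λ|, Im μ = Im λ} (1+|G(μ)|) / δ(|Im λ|)`.
Then for every `v ∈ ℝ` and every `λ ∈ B̄(iv, 1/M(iv))`, `M(λ)/M(iv) ≤ 8 Q`. -/
theorem stmt14 (δ : ℝ → ℝ) (hδmono : ∀ a b : ℝ, 0 ≤ a → a ≤ b → δ b ≤ δ a)
    (hδrange : ∀ a : ℝ, 0 ≤ a → δ a ∈ Set.Ioo (0 : ℝ) 1)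
    (Q : ℝ) (hQ : 1 ≤ Q)
    (G : ℂ → ℂ) (hG : ContinuousOn G {l : ℂ | |l.re| ≤ 1})
    (hlem : ∀ v : ℝ, ∀ l ∈ closedBall ((v : ℂ) * Complex.I) (δ |v|),
      ‖G l‖ ≤ ‖G ((v : ℂ) * Complex.I)‖ + 1 ∧ δ |v| / δ |l.im| ≤ Q)
    (M : ℂ → ℝ)
    (hM : ∀ l : ℂ, M l = (1 + ‖l‖) ^ 2 *
      sSup ((fun m : ℂ => 1 + ‖G m‖) '' {m : ℂ | |m.re| ≤ |l.re| ∧ m.im = l.im}) /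
        δ |l.im|) :
    ∀ v : ℝ, ∀ l ∈ closedBall ((v : ℂ) * Complex.I) (1 / M ((v : ℂ) * Complex.I)),
      M l / M ((v : ℂ) * Complex.I) ≤ 8 * Q :=
  stmt14_general δ hδrange Q G hlem M hM
end

section
/- Let X be the space of bounded uniformly continuous functions f : [0,∞) → ℂ whose Laplace transform extends to an entire function F_f with |F_f(λ)|/M(λ) → 0 as |λ| → ∞, where M : ℂ → [1,∞) is a fixed continuous weight with M → ∞ at infinity. Equipped with the norm ‖f‖_X = ‖f‖_{L^∞} + sup_{λ∈ℂ} |F_f(λ)|/M(λ), X is a Banach space. -/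
open Complex Filter MeasureTheory Set

/-- Membership in the space `X`: `f` is bounded and uniformly continuous on `[0,∞)` and `F`
is an entire extension of its Laplace transform with `|F(λ)|/M(λ) → 0` as `|λ| → ∞`. -/
def MemX (M : ℂ → ℝ) (f : ℝ → ℂ) (F : ℂ → ℂ) : Prop :=
  (∃ C : ℝ, ∀ t : ℝ, 0 ≤ t → ‖f t‖ ≤ C) ∧ UniformContinuousOn f (Set.Ici 0) ∧
    Differentiable ℂ F ∧
    (∀ l : ℂ, 0 < l.re → F l = ∫ t in Set.Ioi (0 : ℝ), f t * Complex.exp (-l * t)) ∧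
    Tendsto (fun l : ℂ => ‖F l‖ / M l) (cocompact ℂ) (nhds 0)

/-- The `X`-norm `‖f‖_X = ‖f‖_{L^∞} + sup_{λ ∈ ℂ} |F(λ)|/M(λ)`. -/
noncomputable def normX (M : ℂ → ℝ) (f : ℝ → ℂ) (F : ℂ → ℂ) : ℝ :=
  (⨆ t : Set.Ici (0 : ℝ), ‖f t‖) + ⨆ l : ℂ, ‖F l‖ / M l

open Topology

/-! A Cauchy sequence in `X` is uniformly Cauchy on `[0,∞)` and, after division by the weight
`M`, uniformly Cauchy on `ℂ`; let `g` and `G / M` be the uniform limits. Uniform limits keep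
boundedness and uniform continuity; since `M` is bounded on compact sets, `F n → G` locally
uniformly, so `G` is entire; the uniform bound lets dominated convergence pass the Laplace
integrals to the limit; and a uniform limit of functions tending to `0` at infinity tends to
`0` at infinity. -/

section UniformLimits

variable {α E : Type*}

theorem UniformCauchySeqOn.exists_tendstoUniformlyOn [UniformSpace E] [CompleteSpace E]
    [Nonempty E] {F : ℕ → α → E} {s : Set α} (h : UniformCauchySeqOn F atTop s) :
    ∃ f : α → E, TendstoUniformlyOn F f atTop s :=
  ⟨fun x => limUnder atTop fun n => F n x,
    h.tendstoUniformlyOn_of_tendsto fun _ hx => (h.cauchySeq hx).tendsto_limUnder⟩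

theorem TendstoUniformlyOn.exists_norm_le [SeminormedAddCommGroup E] {F : ℕ → α → E}
    {f : α → E} {s : Set α} (h : TendstoUniformlyOn F f atTop s)
    (hF : ∀ n, ∃ C, ∀ x ∈ s, ‖F n x‖ ≤ C) : ∃ C, ∀ x ∈ s, ‖f x‖ ≤ C := by
  obtain ⟨N, hN⟩ := (Metric.tendstoUniformlyOn_iff.1 h 1 one_pos).exists
  obtain ⟨C, hC⟩ := hF N
  refine ⟨C + 1, fun x hx => ?_⟩
  calc ‖f x‖ ≤ ‖F N x‖ + ‖f x - F N x‖ := norm_le_norm_add_norm_sub' _ _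
    _ ≤ C + 1 := add_le_add (hC x hx) (by rw [← dist_eq_norm]; exact (hN x hx).le)

theorem TendstoUniformly.tendstoLocallyUniformly_of_div {𝕜 : Type*} [TopologicalSpace α]
    [LocallyCompactSpace α] [NormedField 𝕜] {w : α → 𝕜} (hw : Continuous w)
    (hw0 : ∀ x, w x ≠ 0) {F : ℕ → α → 𝕜} {G : α → 𝕜}
    (h : TendstoUniformly (fun n x => F n x / w x) (fun x => G x / w x) atTop) :
    TendstoLocallyUniformly F G atTop := by
  rw [tendstoLocallyUniformly_iff_forall_isCompact]
  intro K hK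
  obtain ⟨C, hC⟩ := hK.exists_bound_of_continuousOn hw.continuousOn
  have hC1 : 0 < max C 1 := lt_max_of_lt_right one_pos
  refine Metric.tendstoUniformlyOn_iff.2 fun ε hε => ?_
  filter_upwards [Metric.tendstoUniformly_iff.1 h (ε / max C 1) (by positivity)] with n hn x hx
  have hwx : 0 < ‖w x‖ := norm_pos_iff.2 (hw0 x)
  specialize hn x
  rw [dist_eq_norm, ← sub_div, norm_div, div_lt_iff₀ hwx] at hn
  calc dist (G x) (F n x) = ‖G x - F n x‖ := dist_eq_norm _ _
    _ < ε / max C 1 * ‖w x‖ := hn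
    _ ≤ ε / max C 1 * max C 1 := by gcongr; exact (hC x hx).trans (le_max_left _ _)
    _ = ε := div_mul_cancel₀ _ hC1.ne'

theorem TendstoUniformlyOn.tendsto_setIntegral_Ioi_mul_exp {f : ℕ → ℝ → ℂ} {g : ℝ → ℂ}
    (hf : ∀ n, AEStronglyMeasurable (f n) (volume.restrict (Ioi 0)))
    (hfg : TendstoUniformlyOn f g atTop (Ioi 0)) {C : ℝ} (hg : ∀ t ∈ Ioi (0 : ℝ), ‖g t‖ ≤ C)
    {l : ℂ} (hl : 0 < l.re) :
    Tendsto (fun n => ∫ t in Ioi 0, f n t * exp (-l * t)) atTop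
      (𝓝 (∫ t in Ioi 0, g t * exp (-l * t))) := by
  have norm_exp_eq (t : ℝ) : ‖exp (-l * t)‖ = Real.exp (-l.re * t) := by
    simp [Complex.norm_exp, mul_re]
  have hexp : Continuous fun t : ℝ => exp (-l * t) := by fun_prop
  refine tendsto_integral_filter_of_dominated_convergence
    (fun t => (C + 1) * Real.exp (-l.re * t))
    (Eventually.of_forall fun n => (hf n).mul hexp.aestronglyMeasurable) ?_
    ((exp_neg_integrableOn_Ioi 0 hl).const_mul (C + 1)) ?_
  · filter_upwards [Metric.tendstoUniformlyOn_iff.1 hfg 1 one_pos] with n hn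
    filter_upwards [ae_restrict_mem measurableSet_Ioi] with t ht
    rw [norm_mul, norm_exp_eq]
    gcongr
    calc ‖f n t‖ ≤ ‖g t‖ + ‖f n t - g t‖ := norm_le_norm_add_norm_sub' _ _
      _ ≤ C + 1 := add_le_add (hg t ht) (by rw [← dist_eq_norm, dist_comm]; exact (hn t ht).le)
  · filter_upwards [ae_restrict_mem measurableSet_Ioi] with t ht
    exact (hfg.tendsto_at ht).mul_const _

end UniformLimits

theorem norm_div_ofReal (z : ℂ) {r : ℝ} (hr : 0 ≤ r) : ‖z / r‖ = ‖z‖ / r := by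
  rw [norm_div, Complex.norm_of_nonneg hr]

theorem tendsto_div_ofReal_zero_iff {β : Type*} {φ : β → ℂ} {w : β → ℝ} (hw : ∀ x, 0 ≤ w x)
    {L : Filter β} :
    Tendsto (fun x => φ x / w x) L (𝓝 0) ↔ Tendsto (fun x => ‖φ x‖ / w x) L (𝓝 0) := by
  rw [tendsto_zero_iff_norm_tendsto_zero]
  simp only [norm_div_ofReal _ (hw _)]

section normX

variable {M : ℂ → ℝ} {f : ℝ → ℂ} {F : ℂ → ℂ}

theorem normX_nonneg (hM : ∀ l, 0 ≤ M l) : 0 ≤ normX M f F :=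
  add_nonneg (Real.iSup_nonneg fun _ => norm_nonneg _)
    (Real.iSup_nonneg fun l => div_nonneg (norm_nonneg _) (hM l))

theorem norm_le_normX (hM : ∀ l, 0 ≤ M l) (hf : BddAbove (range fun t : Ici (0 : ℝ) => ‖f t‖))
    {t : ℝ} (ht : 0 ≤ t) : ‖f t‖ ≤ normX M f F :=
  (le_ciSup hf ⟨t, ht⟩).trans <|
    le_add_of_nonneg_right (Real.iSup_nonneg fun l => div_nonneg (norm_nonneg _) (hM l))

theorem norm_div_le_normX (hF : BddAbove (range fun l => ‖F l‖ / M l)) (l : ℂ) :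
    ‖F l‖ / M l ≤ normX M f F :=
  (le_ciSup hF l).trans <| le_add_of_nonneg_left (Real.iSup_nonneg fun _ => norm_nonneg _)

theorem normX_le {a b : ℝ} (hf : ∀ t, 0 ≤ t → ‖f t‖ ≤ a) (hF : ∀ l, ‖F l‖ / M l ≤ b) :
    normX M f F ≤ a + b :=
  have : Nonempty (Ici (0 : ℝ)) := nonempty_Ici.to_subtype
  add_le_add (ciSup_le fun t => hf t t.2) (ciSup_le hF)

end normX

namespace MemX

variable {M : ℂ → ℝ} {f f' : ℝ → ℂ} {F F' : ℂ → ℂ}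

theorem bddAbove_norm_div (hMc : Continuous M) (hM : ∀ l, 0 < M l) (h : MemX M f F) :
    BddAbove (range fun l => ‖F l‖ / M l) :=
  let φ : ZeroAtInftyContinuousMap ℂ ℝ :=
    ⟨⟨fun l => ‖F l‖ / M l, h.2.2.1.continuous.norm.div hMc fun l => (hM l).ne'⟩, h.2.2.2.2⟩
  φ.isBounded_range.bddAbove

theorem norm_sub_le_normX (hM : ∀ l, 0 ≤ M l) (h : MemX M f F) (h' : MemX M f' F')
    {t : ℝ} (ht : 0 ≤ t) : ‖f t - f' t‖ ≤ normX M (f - f') (F - F') := by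
  obtain ⟨C, hC⟩ := h.1
  obtain ⟨C', hC'⟩ := h'.1
  refine norm_le_normX (f := f - f') (F := F - F') hM ⟨C + C', ?_⟩ ht
  rintro _ ⟨s, rfl⟩
  exact (norm_sub_le _ _).trans (add_le_add (hC s s.2) (hC' s s.2))

theorem norm_sub_div_le_normX (hMc : Continuous M) (hM : ∀ l, 0 < M l) (h : MemX M f F)
    (h' : MemX M f' F') (l : ℂ) : ‖F l - F' l‖ / M l ≤ normX M (f - f') (F - F') := by
  obtain ⟨B, hB⟩ := (h.bddAbove_norm_div hMc hM).range_add (h'.bddAbove_norm_div hMc hM)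
  refine norm_div_le_normX (f := f - f') (F := F - F') ⟨B, ?_⟩ l
  rintro _ ⟨z, rfl⟩
  calc ‖(F - F') z‖ / M z ≤ ‖F z‖ / M z + ‖F' z‖ / M z := by
        rw [← add_div]; gcongr; exacts [(hM z).le, norm_sub_le _ _]
    _ ≤ B := hB ⟨z, rfl⟩

end MemX

section Completeness

variable {M : ℂ → ℝ} {f : ℕ → ℝ → ℂ} {F : ℕ → ℂ → ℂ} {g : ℝ → ℂ} {G : ℂ → ℂ}

theorem exists_tendstoUniformly_of_cauchy_normX (hMc : Continuous M) (hM : ∀ l, 0 < M l)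
    (hmem : ∀ n, MemX M (f n) (F n))
    (hcauchy : ∀ ε : ℝ, 0 < ε → ∃ N : ℕ, ∀ m n : ℕ, N ≤ m → N ≤ n →
      normX M (f m - f n) (F m - F n) < ε) :
    ∃ (g : ℝ → ℂ) (G : ℂ → ℂ), TendstoUniformlyOn f g atTop (Ici 0) ∧
      TendstoUniformly (fun n l => F n l / M l) (fun l => G l / M l) atTop := by
  have hcauchy' : ∀ ε > 0, ∃ N, ∀ m ≥ N, ∀ n ≥ N, normX M (f m - f n) (F m - F n) < ε :=
    fun ε hε => (hcauchy ε hε).imp fun N hN m hm n hn => hN m n hm hn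
  obtain ⟨g, hg⟩ : ∃ g, TendstoUniformlyOn f g atTop (Ici 0) :=
    UniformCauchySeqOn.exists_tendstoUniformlyOn <| Metric.uniformCauchySeqOn_iff.2 fun ε hε =>
      (hcauchy' ε hε).imp fun N hN m hm n hn t ht => by
        rw [dist_eq_norm]
        exact ((hmem m).norm_sub_le_normX (fun l => (hM l).le) (hmem n) ht).trans_lt
          (hN m hm n hn)
  obtain ⟨H, hH⟩ : ∃ H, TendstoUniformlyOn (fun n l => F n l / M l) H atTop univ :=
    UniformCauchySeqOn.exists_tendstoUniformlyOn <| Metric.uniformCauchySeqOn_iff.2 fun ε hε =>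
      (hcauchy' ε hε).imp fun N hN m hm n hn l _ => by
        rw [dist_eq_norm, ← sub_div, norm_div_ofReal _ (hM l).le]
        exact ((hmem m).norm_sub_div_le_normX hMc hM (hmem n) l).trans_lt (hN m hm n hn)
  refine ⟨g, fun l => M l * H l, hg, ?_⟩
  convert tendstoUniformlyOn_univ.1 hH using 2 with l
  exact mul_div_cancel_left₀ _ (ofReal_ne_zero.2 (hM l).ne')

theorem MemX.of_tendstoUniformly (hMc : Continuous M) (hM : ∀ l, 0 < M l)
    (hmem : ∀ n, MemX M (f n) (F n)) (hfg : TendstoUniformlyOn f g atTop (Ici 0))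
    (hFG : TendstoUniformly (fun n l => F n l / M l) (fun l => G l / M l) atTop) :
    MemX M g G := by
  have hFG' : TendstoLocallyUniformlyOn F G atTop univ :=
    tendstoLocallyUniformlyOn_univ.2 <| hFG.tendstoLocallyUniformly_of_div
      (continuous_ofReal.comp hMc) fun l => ofReal_ne_zero.2 (hM l).ne'
  obtain ⟨C, hC⟩ := hfg.exists_norm_le fun n => (hmem n).1
  refine ⟨⟨C, hC⟩, hfg.uniformContinuousOn (Frequently.of_forall fun n => (hmem n).2.1),
    ?entire, fun l hl => ?laplace, ?decay⟩
  case entire =>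
    exact differentiableOn_univ.1 <| hFG'.differentiableOn
      (Eventually.of_forall fun n => (hmem n).2.2.1.differentiableOn) isOpen_univ
  case laplace =>
    have hf_meas (n : ℕ) : AEStronglyMeasurable (f n) (volume.restrict (Ioi 0)) :=
      ((hmem n).2.1.continuousOn.mono Ioi_subset_Ici_self).aestronglyMeasurable measurableSet_Ioi
    refine tendsto_nhds_unique (hFG'.tendsto_at (mem_univ l)) ?_
    exact ((hfg.mono Ioi_subset_Ici_self).tendsto_setIntegral_Ioi_mul_exp hf_meas
      (fun t ht => hC t (Ioi_subset_Ici_self ht)) hl).congr fun n => ((hmem n).2.2.2.1 l hl).symm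
  case decay =>
    have hM0 (l : ℂ) : 0 ≤ M l := (hM l).le
    exact (tendsto_div_ofReal_zero_iff hM0).1 <| hFG.tendsto_of_eventually_tendsto
      (Eventually.of_forall fun n => (tendsto_div_ofReal_zero_iff hM0).2 (hmem n).2.2.2.2)
      tendsto_const_nhds

theorem tendsto_normX_of_tendstoUniformly (hM : ∀ l, 0 < M l)
    (hfg : TendstoUniformlyOn f g atTop (Ici 0))
    (hFG : TendstoUniformly (fun n l => F n l / M l) (fun l => G l / M l) atTop) :
    Tendsto (fun n => normX M (f n - g) (F n - G)) atTop (𝓝 0) := by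
  refine Metric.tendsto_nhds.2 fun ε hε => ?_
  filter_upwards [Metric.tendstoUniformlyOn_iff.1 hfg (ε / 3) (by positivity),
    Metric.tendstoUniformly_iff.1 hFG (ε / 3) (by positivity)] with n hf hF
  rw [Real.dist_0_eq_abs, abs_of_nonneg (normX_nonneg fun l => (hM l).le)]
  refine (normX_le (a := ε / 3) (b := ε / 3) (fun t ht => ?_) fun l => ?_).trans_lt (by linarith)
  · rw [Pi.sub_apply, ← dist_eq_norm, dist_comm]
    exact (hf t ht).le
  · rw [Pi.sub_apply, ← norm_div_ofReal _ (hM l).le, sub_div, ← dist_eq_norm, dist_comm]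
    exact (hF l).le

end Completeness

theorem stmt15_general (M : ℂ → ℝ) (hMc : Continuous M) (hM1 : ∀ l : ℂ, 1 ≤ M l)
    (f : ℕ → ℝ → ℂ) (F : ℕ → ℂ → ℂ) (hmem : ∀ n : ℕ, MemX M (f n) (F n))
    (hcauchy : ∀ ε : ℝ, 0 < ε → ∃ N : ℕ, ∀ m n : ℕ, N ≤ m → N ≤ n →
      normX M (f m - f n) (F m - F n) < ε) :
    ∃ g : ℝ → ℂ, ∃ G : ℂ → ℂ, MemX M g G ∧
      Tendsto (fun n : ℕ => normX M (f n - g) (F n - G)) atTop (nhds 0) := by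
  have hM (l : ℂ) : 0 < M l := one_pos.trans_le (hM1 l)
  obtain ⟨g, G, hfg, hFG⟩ := exists_tendstoUniformly_of_cauchy_normX hMc hM hmem hcauchy
  exact ⟨g, G, MemX.of_tendstoUniformly hMc hM hmem hfg hFG,
    tendsto_normX_of_tendstoUniformly hM hfg hFG⟩

/-- The space `X` of bounded uniformly continuous functions on `[0,∞)` whose Laplace
transform extends to an entire function decaying relative to the weight `M`, equipped with
the norm `‖f‖_X`, is complete (i.e. it is a Banach space): every Cauchy sequence in `X`
converges in `X`-norm to an element of `X`. -/
theorem stmt15 (M : ℂ → ℝ) (hMc : Continuous M) (hM1 : ∀ l : ℂ, 1 ≤ M l)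
    (hMinf : Tendsto M (cocompact ℂ) atTop)
    (f : ℕ → ℝ → ℂ) (F : ℕ → ℂ → ℂ) (hmem : ∀ n : ℕ, MemX M (f n) (F n))
    (hcauchy : ∀ ε : ℝ, 0 < ε → ∃ N : ℕ, ∀ m n : ℕ, N ≤ m → N ≤ n →
      normX M (f m - f n) (F m - F n) < ε) :
    ∃ g : ℝ → ℂ, ∃ G : ℂ → ℂ, MemX M g G ∧
      Tendsto (fun n : ℕ => normX M (f n - g) (F n - G)) atTop (nhds 0) :=
  stmt15_general M hMc hM1 f F hmem hcauchy
end

section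
/- Let f : [0,∞) → ℂ be bounded and continuous with Laplace transform extending analytically to an open neighborhood of the closed half-plane {Re λ ≥ 0}. Then for every purely imaginary λ = iv, the primitive t ↦ ∫₀^t e^{-ivs} f(s) ds is bounded on [0,∞). -/
/-!
Newman's contour argument. Put `g s = e^{-ivs} f(s)`, let `G` be its Laplace transform (extended
holomorphically near `Re z ≥ 0`) and `G_T` the entire function `z ↦ ∫₀^T e^{-zt} g(t) dt`, so that
`G_T(0)` is the primitive to be bounded. Choose `r > 1` with the closed disc `|z - 1| ≤ r` inside
the domain of `G` and apply Cauchy's formula at `0` to `e^{zT} (z² + r² - 1) (G_T(z) - G(z)) / z`.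
On the circle `|z - 1| = r` one has `z² + r² - 1 = 2 (z - 1) Re z`, and the resulting factor
`|Re z| e^{T Re z}` exactly compensates the elementary bounds
`e^{T Re z} |G(z) - G_T(z)| ≤ B / Re z` for `Re z > 0` and `e^{T Re z} |G_T(z)| ≤ B / |Re z|`
for `Re z < 0`. Hence
`(r² - 1) |G_T(0) - G(0)|` is bounded independently of `T`.
-/

open Complex MeasureTheory Set Metric

noncomputable def laplaceTransform (g : ℝ → ℂ) (z : ℂ) : ℂ :=
  ∫ t in Ioi (0 : ℝ), cexp (-z * t) * g t

noncomputable def truncatedLaplace (g : ℝ → ℂ) (T : ℝ) (z : ℂ) : ℂ :=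
  ∫ t in (0 : ℝ)..T, cexp (-z * t) * g t

theorem sq_add_sq_sub_one_eq_of_mem_sphere_one {r : ℝ} {z : ℂ} (hz : z ∈ sphere (1 : ℂ) r) :
    z ^ 2 + ((r : ℂ) ^ 2 - 1) = 2 * (z - 1) * z.re := by
  have hr : r ^ 2 = (z.re - 1) ^ 2 + z.im ^ 2 := by
    rw [← mem_sphere_iff_norm.1 hz, ← Complex.normSq_eq_norm_sq, normSq_apply]
    simp only [sub_re, one_re, sub_im, one_im, sub_zero]
    ring
  apply Complex.ext <;> simp only [sq, add_re, add_im, mul_re, mul_im, sub_re, sub_im,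
    ofReal_re, ofReal_im, one_re, one_im, re_ofNat, im_ofNat]
  · linear_combination hr
  · ring

theorem norm_le_of_forall_mem_sphere_norm_div_le {H : ℂ → ℂ} {c w : ℂ} {R C : ℝ}
    (hH : DifferentiableOn ℂ H (closedBall c R)) (hw : w ∈ ball c R)
    (hC : ∀ z ∈ sphere c R, ‖H z / (z - w)‖ ≤ C) : ‖H w‖ ≤ R * C := by
  have hR : 0 ≤ R := (pos_of_mem_ball hw).le
  have hint := circleIntegral.norm_integral_le_of_norm_le_const hR
    (f := fun z => (z - w)⁻¹ • H z) (by simpa [div_eq_inv_mul] using hC)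
  rw [hH.circleIntegral_sub_inv_smul hw, norm_smul] at hint
  have h2pi : ‖(2 * Real.pi * I : ℂ)‖ = 2 * Real.pi := by simp [Real.pi_pos.le]
  rw [h2pi, mul_assoc (2 * Real.pi)] at hint
  exact le_of_mul_le_mul_left hint Real.two_pi_pos

theorem exists_one_lt_closedBall_one_subset {U : Set ℂ} (hU : IsOpen U)
    (hsub : {z : ℂ | 0 ≤ z.re} ⊆ U) : ∃ r, 1 < r ∧ closedBall (1 : ℂ) r ⊆ U := by
  have hball : closedBall (1 : ℂ) 1 ⊆ U := fun z hz => hsub <| by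
    have h := (abs_le.1 ((abs_re_le_norm (z - 1)).trans (mem_closedBall_iff_norm.1 hz))).1
    simp only [sub_re, one_re] at h
    show 0 ≤ z.re
    linarith
  obtain ⟨δ, hδ, hδU⟩ := (isCompact_closedBall (1 : ℂ) 1).exists_cthickening_subset_open hU hball
  exact ⟨δ + 1, by linarith, cthickening_closedBall hδ.le zero_le_one (1 : ℂ) ▸ hδU⟩

section Laplace

variable {g : ℝ → ℂ} {G : ℂ → ℂ} {B T : ℝ} {z : ℂ}

theorem norm_cexp_neg_mul_ofReal (z : ℂ) (t : ℝ) : ‖cexp (-z * t)‖ = Real.exp (-z.re * t) := by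
  simp [Complex.norm_exp]

theorem differentiable_truncatedLaplace (hg : IntervalIntegrable g volume 0 T) :
    Differentiable ℂ (truncatedLaplace g T) := by
  intro z₀
  have hF : ∀ z : ℂ, IntervalIntegrable (fun t : ℝ => cexp (-z * t) * g t) volume 0 T :=
    fun z => hg.continuousOn_mul (by fun_prop)
  refine (intervalIntegral.hasDerivAt_integral_of_dominated_loc_of_deriv_le
    (F' := fun z t => cexp (-z * t) * -t * g t)
    (bound := fun t => Real.exp ((‖z₀‖ + 1) * |T|) * |T| * ‖g t‖)
    (ball_mem_nhds z₀ one_pos) (.of_forall fun z => (hF z).def'.aestronglyMeasurable)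
    (hF z₀) ?_ ?_ (hg.norm.const_mul _) ?_).2.differentiableAt
  · exact (hg.continuousOn_mul (g := fun t : ℝ => cexp (-z₀ * t) * -t)
      (by fun_prop)).def'.aestronglyMeasurable
  · refine .of_forall fun t ht z hz => ?_
    have ht' : |t| ≤ |T| := by simpa using abs_sub_left_of_mem_uIcc (uIoc_subset_uIcc ht)
    have hz' : ‖z‖ ≤ ‖z₀‖ + 1 := by
      rw [mem_ball, dist_eq_norm] at hz
      linarith [norm_le_norm_add_norm_sub' z z₀]
    rw [norm_mul, norm_mul, norm_neg, Complex.norm_real, Real.norm_eq_abs]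
    gcongr
    refine (norm_exp_le_exp_norm _).trans (Real.exp_le_exp.2 ?_)
    rw [norm_mul, norm_neg, Complex.norm_real, Real.norm_eq_abs]
    gcongr
  · refine .of_forall fun t _ z _ => ?_
    have : HasDerivAt (fun z : ℂ => -z * t) (-t) z := by
      simpa using (hasDerivAt_id z).neg.mul_const (t : ℂ)
    exact this.cexp.mul_const (g t)

theorem integrableOn_laplace_integrand (hg : ContinuousOn g (Ici 0))
    (hB : ∀ t, 0 ≤ t → ‖g t‖ ≤ B) (hz : 0 < z.re) :
    IntegrableOn (fun t : ℝ => cexp (-z * t) * g t) (Ioi 0) := by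
  refine Integrable.mono' ((exp_neg_integrableOn_Ioi 0 hz).const_mul B)
    (((by fun_prop : Continuous fun t : ℝ => cexp (-z * t)).continuousOn.mul hg).mono
      Ioi_subset_Ici_self |>.aestronglyMeasurable measurableSet_Ioi) ?_
  filter_upwards [self_mem_ae_restrict measurableSet_Ioi] with t ht
  rw [norm_mul, norm_cexp_neg_mul_ofReal, mul_comm, neg_mul]
  gcongr
  exact hB t (le_of_lt ht)

theorem laplaceTransform_eq_truncatedLaplace_add (hg : ContinuousOn g (Ici 0))
    (hB : ∀ t, 0 ≤ t → ‖g t‖ ≤ B) (hz : 0 < z.re) (hT : 0 ≤ T) :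
    laplaceTransform g z = truncatedLaplace g T z + ∫ t in Ioi T, cexp (-z * t) * g t := by
  have hint := integrableOn_laplace_integrand hg hB hz
  rw [laplaceTransform, truncatedLaplace, intervalIntegral.integral_of_le hT,
    ← Ioc_union_Ioi_eq_Ioi hT, setIntegral_union (Ioc_disjoint_Ioi le_rfl) measurableSet_Ioi
      (hint.mono_set (Ioc_union_Ioi_eq_Ioi hT ▸ subset_union_left))
      (hint.mono_set (Ioi_subset_Ioi hT))]

theorem exp_mul_norm_laplace_tail_le (hB : ∀ t, 0 ≤ t → ‖g t‖ ≤ B) (hz : 0 < z.re)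
    (hT : 0 ≤ T) :
    Real.exp (z.re * T) * ‖∫ t in Ioi T, cexp (-z * t) * g t‖ ≤ B / z.re := by
  have hbound : ‖∫ t in Ioi T, cexp (-z * t) * g t‖ ≤ ∫ t in Ioi T, B * Real.exp (-z.re * t) := by
    refine norm_integral_le_of_norm_le ((integrableOn_exp_mul_Ioi (by linarith) T).const_mul B) ?_
    filter_upwards [self_mem_ae_restrict measurableSet_Ioi] with t ht
    rw [norm_mul, norm_cexp_neg_mul_ofReal, mul_comm]
    gcongr
    exact hB t (hT.trans ht.le)
  rw [integral_const_mul, integral_exp_mul_Ioi (by linarith)] at hbound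
  calc Real.exp (z.re * T) * ‖∫ t in Ioi T, cexp (-z * t) * g t‖
      ≤ Real.exp (z.re * T) * (B * (-Real.exp (-z.re * T) / -z.re)) := by gcongr
    _ = B / z.re := by
      rw [neg_div_neg_eq, mul_div_assoc', ← mul_div_assoc, mul_left_comm, ← Real.exp_add]
      simp

theorem exp_mul_norm_truncatedLaplace_le (hB : ∀ t, 0 ≤ t → ‖g t‖ ≤ B) (hz : z.re < 0)
    (hT : 0 ≤ T) :
    Real.exp (z.re * T) * ‖truncatedLaplace g T z‖ ≤ B / -z.re := by
  have hint : IntegrableOn (fun t : ℝ => B * Real.exp (-z.re * t)) (Iic T) :=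
    (integrableOn_exp_mul_Iic (by linarith) T).const_mul B
  have hbound : ‖truncatedLaplace g T z‖ ≤ ∫ t in Iic T, B * Real.exp (-z.re * t) :=
    calc ‖truncatedLaplace g T z‖ ≤ ∫ t in Ioc 0 T, B * Real.exp (-z.re * t) := by
          rw [truncatedLaplace, intervalIntegral.integral_of_le hT]
          refine norm_integral_le_of_norm_le (hint.mono_set Ioc_subset_Iic_self) ?_
          filter_upwards [self_mem_ae_restrict measurableSet_Ioc] with t ht
          rw [norm_mul, norm_cexp_neg_mul_ofReal, mul_comm]
          gcongr
          exact hB t ht.1.le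
      _ ≤ ∫ t in Iic T, B * Real.exp (-z.re * t) :=
          setIntegral_mono_set hint
            (.of_forall fun t => mul_nonneg ((norm_nonneg _).trans (hB 0 le_rfl)) (by positivity))
            Ioc_subset_Iic_self.eventuallyLE
  rw [integral_const_mul, integral_exp_mul_Iic (by linarith)] at hbound
  calc Real.exp (z.re * T) * ‖truncatedLaplace g T z‖
      ≤ Real.exp (z.re * T) * (B * (Real.exp (-z.re * T) / -z.re)) := by gcongr
    _ = B / -z.re := by
      rw [mul_div_assoc', ← mul_div_assoc, mul_left_comm, ← Real.exp_add]
      simp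

theorem abs_re_mul_exp_mul_norm_truncatedLaplace_sub_le (hg : ContinuousOn g (Ici 0))
    (hB : ∀ t, 0 ≤ t → ‖g t‖ ≤ B) (hG : ∀ z : ℂ, 0 < z.re → G z = laplaceTransform g z)
    (hT : 0 ≤ T) (z : ℂ) :
    |z.re| * Real.exp (z.re * T) * ‖truncatedLaplace g T z - G z‖ ≤ B + |z.re| * ‖G z‖ := by
  have hB0 : 0 ≤ B := (norm_nonneg _).trans (hB 0 le_rfl)
  rcases lt_trichotomy z.re 0 with hz | hz | hz
  · have hexp : Real.exp (z.re * T) ≤ 1 :=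
      Real.exp_le_one_iff.2 (mul_nonpos_of_nonpos_of_nonneg hz.le hT)
    calc |z.re| * Real.exp (z.re * T) * ‖truncatedLaplace g T z - G z‖
        ≤ |z.re| * (Real.exp (z.re * T) * ‖truncatedLaplace g T z‖)
          + |z.re| * (Real.exp (z.re * T) * ‖G z‖) := by
          rw [← mul_add, ← mul_add, mul_assoc]
          gcongr
          exact norm_sub_le _ _
      _ ≤ B + |z.re| * ‖G z‖ := by
          gcongr
          · rw [abs_of_neg hz]
            exact (le_div_iff₀' (neg_pos.2 hz)).1 (exp_mul_norm_truncatedLaplace_le hB hz hT)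
          · exact mul_le_of_le_one_left (norm_nonneg _) hexp
  · simp [hz, hB0]
  · rw [hG z hz, laplaceTransform_eq_truncatedLaplace_add hg hB hz hT, sub_add_cancel_left,
      norm_neg, abs_of_pos hz, mul_assoc]
    calc z.re * (Real.exp (z.re * T) * ‖∫ t in Ioi T, cexp (-z * t) * g t‖) ≤ B :=
          (le_div_iff₀' hz).1 (exp_mul_norm_laplace_tail_le hB hz hT)
      _ ≤ _ := le_add_of_nonneg_right (by positivity)

theorem norm_truncatedLaplace_sub_le (hg : ContinuousOn g (Ici 0))
    (hB : ∀ t, 0 ≤ t → ‖g t‖ ≤ B) {r M : ℝ} (hr : 1 < r)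
    (hGd : DifferentiableOn ℂ G (closedBall 1 r)) (hM : ∀ z ∈ sphere (1 : ℂ) r, ‖G z‖ ≤ M)
    (hG : ∀ z : ℂ, 0 < z.re → G z = laplaceTransform g z) (hT : 0 ≤ T) :
    (r ^ 2 - 1) * ‖truncatedLaplace g T 0 - G 0‖ ≤ r * (2 * r * (B / (r - 1) + M)) := by
  set H : ℂ → ℂ := fun z =>
    cexp (z * T) * (z ^ 2 + ((r : ℂ) ^ 2 - 1)) * (truncatedLaplace g T z - G z) with hH
  have hHd : DifferentiableOn ℂ H (closedBall 1 r) :=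
    ((by fun_prop : Differentiable ℂ fun z : ℂ => cexp (z * T) * (z ^ 2 + ((r : ℂ) ^ 2 - 1)))
      |>.differentiableOn).mul <|
      ((differentiable_truncatedLaplace ((hg.mono Icc_subset_Ici_self).intervalIntegrable_of_Icc
        hT)).differentiableOn).sub hGd
  have hH0 : ‖H 0‖ = (r ^ 2 - 1) * ‖truncatedLaplace g T 0 - G 0‖ := by
    have hr2 : 0 ≤ r ^ 2 - 1 := by nlinarith
    simp [hH, ← ofReal_pow, ← ofReal_one, ← ofReal_sub, abs_of_nonneg hr2]
  rw [← hH0]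
  refine norm_le_of_forall_mem_sphere_norm_div_le hHd (by simpa using hr) fun z hz => ?_
  have hzr : r - 1 ≤ ‖z‖ := by
    have := norm_sub_norm_le (z - 1) (-1)
    rw [mem_sphere_iff_norm.1 hz] at this
    simpa using this
  have hM0 : 0 ≤ M := (norm_nonneg _).trans (hM z hz)
  have hkey := abs_re_mul_exp_mul_norm_truncatedLaplace_sub_le hg hB hG hT z
  calc ‖H z / (z - 0)‖
      = 2 * r * (|z.re| * Real.exp (z.re * T) * ‖truncatedLaplace g T z - G z‖) / ‖z‖ := by
        simp only [hH, sq_add_sq_sub_one_eq_of_mem_sphere_one hz, sub_zero, norm_div, norm_mul,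
          norm_exp, mul_re, ofReal_re, ofReal_im, mul_zero, sub_zero, norm_ofNat, norm_real,
          Real.norm_eq_abs, mem_sphere_iff_norm.1 hz]
        ring
    _ ≤ 2 * r * (B + |z.re| * M) / ‖z‖ := by grw [hkey, hM z hz]
    _ = 2 * r * (B / ‖z‖ + |z.re| / ‖z‖ * M) := by ring
    _ ≤ 2 * r * (B / (r - 1) + M) := by
        have hB0 : 0 ≤ B := (norm_nonneg _).trans (hB 0 le_rfl)
        gcongr
        exact mul_le_of_le_one_left hM0 (div_le_one_of_le₀ (abs_re_le_norm z) (norm_nonneg z))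

theorem exists_bound_integral_of_laplaceTransform_extends
    (hg : ContinuousOn g (Ici 0)) (hB : ∀ t, 0 ≤ t → ‖g t‖ ≤ B) {U : Set ℂ} (hU : IsOpen U)
    (hUsub : {z : ℂ | 0 ≤ z.re} ⊆ U) (hGd : DifferentiableOn ℂ G U)
    (hG : ∀ z : ℂ, 0 < z.re → G z = laplaceTransform g z) :
    ∃ C, ∀ T, 0 ≤ T → ‖∫ t in (0 : ℝ)..T, g t‖ ≤ C := by
  obtain ⟨r, hr, hrU⟩ := exists_one_lt_closedBall_one_subset hU hUsub
  obtain ⟨M, hM⟩ := (isCompact_sphere (1 : ℂ) r).exists_bound_of_continuousOn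
    (hGd.continuousOn.mono (sphere_subset_closedBall.trans hrU))
  have hr2 : 0 < r ^ 2 - 1 := by nlinarith
  refine ⟨‖G 0‖ + r * (2 * r * (B / (r - 1) + M)) / (r ^ 2 - 1), fun T hT => ?_⟩
  have hdiff := norm_truncatedLaplace_sub_le hg hB hr (hGd.mono hrU) hM hG hT
  have hGT0 : truncatedLaplace g T 0 = ∫ t in (0 : ℝ)..T, g t := by simp [truncatedLaplace]
  calc ‖∫ t in (0 : ℝ)..T, g t‖ = ‖(truncatedLaplace g T 0 - G 0) + G 0‖ := by
        rw [sub_add_cancel, hGT0]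
    _ ≤ ‖truncatedLaplace g T 0 - G 0‖ + ‖G 0‖ := norm_add_le _ _
    _ ≤ _ := by
        rw [add_comm (‖G 0‖)]
        gcongr
        rwa [le_div_iff₀' hr2]

end Laplace

/-- If `f : [0,∞) → ℂ` is bounded continuous and its Laplace transform extends analytically
to an open neighborhood of the closed half-plane `{Re λ ≥ 0}`, then for every `v ∈ ℝ` the
primitive `t ↦ ∫₀^t e^{-i v s} f(s) ds` is bounded on `[0,∞)`. -/
theorem stmt17 (f : ℝ → ℂ) (B : ℝ) (hf : ContinuousOn f (Set.Ici 0))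
    (hB : ∀ t : ℝ, 0 ≤ t → ‖f t‖ ≤ B)
    (hext : ∃ U : Set ℂ, IsOpen U ∧ {l : ℂ | 0 ≤ l.re} ⊆ U ∧
      ∃ F : ℂ → ℂ, DifferentiableOn ℂ F U ∧
        ∀ l : ℂ, 0 < l.re → F l = ∫ t in Set.Ioi (0 : ℝ), f t * Complex.exp (-l * t)) :
    ∀ v : ℝ, ∃ C : ℝ, ∀ t : ℝ, 0 ≤ t →
      ‖∫ s in (0 : ℝ)..t, Complex.exp (-(Complex.I * v) * s) * f s‖ ≤ C := by
  obtain ⟨U, hU, hUsub, F, hFd, hF⟩ := hext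
  intro v
  have hshift : Differentiable ℂ fun z : ℂ => z + I * v := by fun_prop
  refine exists_bound_integral_of_laplaceTransform_extends (B := B)
    ((by fun_prop : Continuous fun s : ℝ => cexp (-(I * v) * s)).continuousOn.mul hf)
    (fun t ht => ?_) (hU.preimage hshift.continuous) (fun z hz => hUsub ?_)
    (hFd.comp hshift.differentiableOn (mapsTo_preimage _ _)) (fun z hz => ?_)
  · simpa [norm_exp] using hB t ht
  · simpa using hz
  · rw [Function.comp_apply, hF _ (by simpa using hz), laplaceTransform]
    congr 1
    ext t
    rw [neg_add, add_mul, exp_add]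
    ring
end
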